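/- arXiv:2503.20773 — 2 statements merged into one kernel-verified Lean document; each statement's English description precedes it below -/
import Mathlib

section
/- Let $\bar{n}^1, \bar{n}^2 \in N_T^d$, and for $k = 1,2$ define the difference sequences $m^k_i = n^k_i - n^k_{i+1}$ for $1 \le i \le d-1$. Then the stabilizer containment $S_{\bar{n}^1} \subseteq S_{\bar{n}^2}$ holds if and only if for every $1 \le i \le d-1$ one has $m^1_i \le m^2_i$ and ($m^1_i = 0$ if and only if $m^2_i = 0$). -/
open Matrix Polynomial

noncomputable section

/-- `t = X⁻¹` in the Laurent series field `F = 𝔽_q((X))`. -/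
def tF (Fq : Type) [Field Fq] : LaurentSeries Fq := HahnSeries.single (-1 : ℤ) (1 : Fq)

/-- The embedding of the polynomial ring `𝔽_q[t]` into `F = 𝔽_q((X))`, sending the
polynomial variable to `t = X⁻¹`. -/
def polyToF (Fq : Type) [Field Fq] : Polynomial Fq →+* LaurentSeries Fq :=
  Polynomial.eval₂RingHom (HahnSeries.C) (tF Fq)

/-- The lattice `l_n̄ = t^{n₁}𝒪e₁ ⊕ ⋯ ⊕ t^{n_d}𝒪e_d` as an `𝒪`-submodule of `F^d`,
where `𝒪 = 𝔽_q[[X]]` acts on `F = 𝔽_q((X))` via the inclusion, and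
`t^{n} = HahnSeries.single (-n) 1`. -/
def lattM (Fq : Type) [Field Fq] {d : ℕ} (n : Fin d → ℤ) :
    Submodule (PowerSeries Fq) (Fin d → LaurentSeries Fq) :=
  Submodule.span (PowerSeries Fq)
    (Set.range fun i : Fin d =>
      (HahnSeries.single (-(n i)) (1 : Fq) : LaurentSeries Fq) •
        (Pi.single i (1 : LaurentSeries Fq) : Fin d → LaurentSeries Fq))

/-- The image `g L` of an `𝒪`-submodule `L ⊆ F^d` under a matrix `g ∈ M_d(F)`. -/
def actM (Fq : Type) [Field Fq] {d : ℕ} (g : Matrix (Fin d) (Fin d) (LaurentSeries Fq))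
    (L : Submodule (PowerSeries Fq) (Fin d → LaurentSeries Fq)) :
    Submodule (PowerSeries Fq) (Fin d → LaurentSeries Fq) :=
  L.map ((g.mulVecLin).restrictScalars (PowerSeries Fq))

/-- The image `a L` of an `𝒪`-submodule `L ⊆ F^d` under scalar multiplication by `a ∈ F`. -/
def scaleM (Fq : Type) [Field Fq] {d : ℕ} (a : LaurentSeries Fq)
    (L : Submodule (PowerSeries Fq) (Fin d → LaurentSeries Fq)) :
    Submodule (PowerSeries Fq) (Fin d → LaurentSeries Fq) :=
  L.map ((LinearMap.lsmul (LaurentSeries Fq) (Fin d → LaurentSeries Fq) a).restrictScalars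
    (PowerSeries Fq))

/-- The image in `M_d(F)` of a matrix over `𝔽_q[t]`. -/
def glToF (Fq : Type) [Field Fq] {d : ℕ} (γ : GL (Fin d) (Polynomial Fq)) :
    Matrix (Fin d) (Fin d) (LaurentSeries Fq) :=
  (γ : Matrix (Fin d) (Fin d) (Polynomial Fq)).map (polyToF Fq)

/-- The stabilizer `S_n̄ = {γ ∈ GL_d(𝔽_q[t]) : γ l_n̄ = l_n̄}`. -/
def Stab (Fq : Type) [Field Fq] {d : ℕ} (n : Fin d → ℤ) :
    Set (GL (Fin d) (Polynomial Fq)) :=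
  {γ | actM Fq (glToF Fq γ) (lattM Fq n) = lattM Fq n}

/-- `N_T^d`: integer tuples `n₁ ≥ n₂ ≥ ⋯ ≥ n_d = 0`. -/
def NT {d : ℕ} (n : Fin d → ℤ) : Prop :=
  (∀ i j : Fin d, i ≤ j → n j ≤ n i) ∧ ∀ i : Fin d, (i : ℕ) = d - 1 → n i = 0

/-- The difference sequence `m_i = n_i - n_{i+1}`. -/
def mdiff {d : ℕ} (n : Fin d → ℤ) (i : ℕ) (h : i + 1 < d) : ℤ :=
  n ⟨i, Nat.lt_of_succ_lt h⟩ - n ⟨i + 1, h⟩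

end

/-!
An element `γ ∈ GL_d(𝔽_q[t])` lies in `S_n̄` iff the entries of `γ` and of `γ⁻¹` satisfy
`deg γ_ij ≤ n_i - n_j` (a negative bound forcing the entry to vanish). If the gaps of `n̄¹` are
dominated by those of `n̄²` and vanish together with them, then every bound `n¹_i - n¹_j` is either
negative or at most `n²_i - n²_j`, so `S_{n̄¹} ⊆ S_{n̄²}`. Conversely the transvection
`1 + t^{m¹_i} E_{i,i+1}` lies in `S_{n̄¹}`, which forces `m¹_i ≤ m²_i`, and when `m¹_i = 0` the
permutation matrix swapping `e_i` and `e_{i+1}` lies in `S_{n̄¹}`, which forces `m²_i = 0`.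
-/

/-- `deg p ≤ c` for an integer `c`; for `c < 0` this forces `p = 0`. -/
def DegreeAtMost {R : Type*} [Semiring R] (p : R[X]) (c : ℤ) : Prop :=
  ∀ k : ℕ, c < k → p.coeff k = 0

namespace DegreeAtMost

variable {R : Type*} [Semiring R] {p q : R[X]} {c c' : ℤ}

theorem mono (h : DegreeAtMost p c) (hc : c ≤ c') : DegreeAtMost p c' :=
  fun k hk => h k (hc.trans_lt hk)

theorem of_neg (h : DegreeAtMost p c) (hc : c < 0) : DegreeAtMost p c' :=
  fun k _ => h k (hc.trans_le (Int.natCast_nonneg k))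

theorem zero : DegreeAtMost (0 : R[X]) c := fun k _ => coeff_zero k

theorem add (hp : DegreeAtMost p c) (hq : DegreeAtMost q c) : DegreeAtMost (p + q) c :=
  fun k hk => by rw [coeff_add, hp k hk, hq k hk, add_zero]

theorem neg {R : Type*} [Ring R] {p : R[X]} (h : DegreeAtMost p c) : DegreeAtMost (-p) c :=
  fun k hk => by rw [coeff_neg, h k hk, neg_zero]

end DegreeAtMost

theorem degreeAtMost_X_pow_iff {R : Type*} [Semiring R] [Nontrivial R] {e : ℕ} {c : ℤ} :
    DegreeAtMost ((X : R[X]) ^ e) c ↔ (e : ℤ) ≤ c := by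
  refine ⟨fun h => ?_, fun hc k hk => by rw [coeff_X_pow, if_neg (by omega)]⟩
  by_contra! hlt
  simpa using h e hlt

theorem degreeAtMost_one_iff {R : Type*} [Semiring R] [Nontrivial R] {c : ℤ} :
    DegreeAtMost (1 : R[X]) c ↔ 0 ≤ c := by
  simpa using degreeAtMost_X_pow_iff (R := R) (e := 0) (c := c)

section Gaps

variable {d : ℕ} {n₁ n₂ : Fin d → ℤ}

theorem sub_le_sub_of_mdiff_le (h : ∀ i (hi : i + 1 < d), mdiff n₁ i hi ≤ mdiff n₂ i hi)
    {i j : Fin d} (hij : i ≤ j) : n₁ i - n₁ j ≤ n₂ i - n₂ j := by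
  obtain ⟨b, hb⟩ := j
  replace hij : i.val ≤ b := hij
  induction b, hij using Nat.le_induction with
  | base => simp
  | succ b hib ih =>
    have hstep := h b hb
    have hprev := ih (by omega)
    rw [mdiff, mdiff] at hstep
    omega

theorem eq_of_eq_of_mdiff_eq_zero (hn₁ : Antitone n₁)
    (h : ∀ i (hi : i + 1 < d), mdiff n₁ i hi = 0 → mdiff n₂ i hi = 0)
    {i j : Fin d} (hij : i ≤ j) (heq : n₁ i = n₁ j) : n₂ i = n₂ j := by
  obtain ⟨b, hb⟩ := j
  replace hij : i.val ≤ b := hij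
  revert heq
  induction b, hij using Nat.le_induction with
  | base => exact fun _ => rfl
  | succ b hib ih =>
    intro heq
    have hib' : i ≤ ⟨b, by omega⟩ := by simpa [Fin.le_def] using hib
    have hmono : n₁ ⟨b + 1, hb⟩ ≤ n₁ ⟨b, by omega⟩ := hn₁ (Fin.mk_le_mk.mpr b.le_succ)
    have heq' : n₁ i = n₁ ⟨b, by omega⟩ := (le_antisymm (hn₁ hib') (heq ▸ hmono)).symm
    have hprev := ih (by omega) heq'
    have hstep := h b hb
    rw [mdiff, mdiff] at hstep
    omega

theorem sub_neg_or_sub_le_sub (hn₁ : Antitone n₁)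
    (hle : ∀ i (hi : i + 1 < d), mdiff n₁ i hi ≤ mdiff n₂ i hi)
    (hzero : ∀ i (hi : i + 1 < d), mdiff n₁ i hi = 0 → mdiff n₂ i hi = 0) (i j : Fin d) :
    n₁ i - n₁ j < 0 ∨ n₁ i - n₁ j ≤ n₂ i - n₂ j := by
  rcases le_total i j with hij | hji
  · exact .inr (sub_le_sub_of_mdiff_le hle hij)
  · rcases (hn₁ hji).lt_or_eq with hlt | heq
    · exact .inl (sub_neg.mpr hlt)
    · have := eq_of_eq_of_mdiff_eq_zero hn₁ hzero hji heq.symm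
      exact .inr (by omega)

end Gaps

section

variable {Fq : Type} [Field Fq] {d : ℕ}

theorem polyToF_monomial (k : ℕ) (a : Fq) :
    polyToF Fq (monomial k a) = HahnSeries.single (-(k : ℤ)) a := by
  rw [polyToF, coe_eval₂RingHom, eval₂_monomial, tF, HahnSeries.single_pow, HahnSeries.C_apply,
    HahnSeries.single_mul_single]
  simp

theorem coeff_polyToF (p : Fq[X]) (m : ℤ) :
    (polyToF Fq p).coeff m = if m ≤ 0 then p.coeff (-m).toNat else 0 := by
  induction p using Polynomial.induction_on' with
  | add f g hf hg =>
    simp only [map_add, HahnSeries.coeff_add, hf, hg, coeff_add]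
    split_ifs <;> simp
  | monomial k a =>
    rw [polyToF_monomial, HahnSeries.coeff_single, coeff_monomial]
    split_ifs <;> first | rfl | omega

theorem forall_coeff_polyToF_lt_eq_zero_iff (p : Fq[X]) (c : ℤ) :
    (∀ m < c, (polyToF Fq p).coeff m = 0) ↔ DegreeAtMost p (-c) := by
  refine ⟨fun h k hk => ?_, fun h m hm => ?_⟩
  · simpa [coeff_polyToF] using h (-k) (by omega)
  · rw [coeff_polyToF]
    split_ifs
    exacts [h _ (by omega), rfl]

theorem exists_eq_single_mul_iff (s : LaurentSeries Fq) (c : ℤ) :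
    (∃ a : PowerSeries Fq, s = HahnSeries.single c 1 * HahnSeries.ofPowerSeries ℤ Fq a) ↔
      ∀ m < c, s.coeff m = 0 := by
  refine ⟨?_, fun h => ⟨PowerSeries.mk fun k => s.coeff (c + k), ?_⟩⟩
  · rintro ⟨a, rfl⟩ m hm
    rw [HahnSeries.coeff_single_mul, one_mul, PowerSeries.coeff_coe, if_pos (by omega)]
  · ext m
    rw [HahnSeries.coeff_single_mul, one_mul, PowerSeries.coeff_coe]
    split_ifs with hm
    · exact h m (by omega)
    · rw [PowerSeries.coeff_mk]
      congr 1
      omega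

theorem mem_lattM_iff (n : Fin d → ℤ) (v : Fin d → LaurentSeries Fq) :
    v ∈ lattM Fq n ↔ ∀ i, ∀ m < -n i, (v i).coeff m = 0 := by
  have hsum : ∀ (a : Fin d → PowerSeries Fq) i,
      (∑ j, a j • ((HahnSeries.single (-n j) 1 : LaurentSeries Fq) • Pi.single j 1)) i =
        HahnSeries.single (-n i) 1 * HahnSeries.ofPowerSeries ℤ Fq (a i) := by
    intro a i
    rw [Finset.sum_apply, Finset.sum_eq_single_of_mem i (Finset.mem_univ i)]
    · simp [Algebra.smul_def, mul_comm]
    · intro j _ hji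
      simp [Pi.single_eq_of_ne hji.symm]
  rw [lattM, Submodule.mem_span_range_iff_exists_fun]
  constructor
  · rintro ⟨a, rfl⟩ i
    exact (exists_eq_single_mul_iff _ _).mp ⟨a i, hsum a i⟩
  · intro h
    choose a ha using fun i => (exists_eq_single_mul_iff (v i) (-n i)).mpr (h i)
    exact ⟨a, funext fun i => (hsum a i).trans (ha i).symm⟩

theorem actM_lattM_le_iff (n : Fin d → ℤ) (P : Matrix (Fin d) (Fin d) Fq[X]) :
    actM Fq (P.map (polyToF Fq)) (lattM Fq n) ≤ lattM Fq n ↔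
      ∀ i j, DegreeAtMost (P i j) (n i - n j) := by
  rw [actM]
  nth_rw 1 [lattM]
  rw [Submodule.map_span_le, Set.forall_mem_range, forall_comm]
  refine forall_congr' fun j => ?_
  rw [mem_lattM_iff]
  refine forall_congr' fun i => ?_
  have himage : (P.map (polyToF Fq) *ᵥ
      ((HahnSeries.single (-n j) 1 : LaurentSeries Fq) • Pi.single j 1)) i =
        HahnSeries.single (-n j) 1 * polyToF Fq (P i j) := by
    simp [← Pi.single_smul', mul_comm]
  rw [LinearMap.restrictScalars_apply, mulVecLin_apply, himage, ← neg_sub (n j),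
    ← forall_coeff_polyToF_lt_eq_zero_iff]
  simp only [HahnSeries.coeff_single_mul, one_mul]
  exact ⟨fun h m hm => by simpa using h (m - n j) (by omega),
    fun h m hm => h _ (by omega)⟩

theorem actM_glToF_mul (γ δ : GL (Fin d) Fq[X])
    (L : Submodule (PowerSeries Fq) (Fin d → LaurentSeries Fq)) :
    actM Fq (glToF Fq (γ * δ)) L = actM Fq (glToF Fq γ) (actM Fq (glToF Fq δ) L) := by
  rw [actM, actM, actM, glToF, Units.val_mul, Matrix.map_mul, mulVecLin_mul, ← Submodule.map_comp]
  rfl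

theorem actM_glToF_one (L : Submodule (PowerSeries Fq) (Fin d → LaurentSeries Fq)) :
    actM Fq (glToF Fq 1) L = L := by
  rw [actM, glToF, Units.val_one, Matrix.map_one _ (map_zero _) (map_one _), mulVecLin_one]
  exact Submodule.map_id L

theorem actM_glToF_eq_iff (γ : GL (Fin d) Fq[X])
    (L : Submodule (PowerSeries Fq) (Fin d → LaurentSeries Fq)) :
    actM Fq (glToF Fq γ) L = L ↔
      actM Fq (glToF Fq γ) L ≤ L ∧ actM Fq (glToF Fq γ⁻¹) L ≤ L := by
  have cancel {δ ε : GL (Fin d) Fq[X]} (h : δ * ε = 1) :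
      actM Fq (glToF Fq δ) (actM Fq (glToF Fq ε) L) = L := by
    rw [← actM_glToF_mul, h, actM_glToF_one]
  constructor
  · intro h
    refine ⟨h.le, ?_⟩
    conv_lhs => rw [← h]
    exact (cancel (inv_mul_cancel γ)).le
  · rintro ⟨h, hinv⟩
    refine le_antisymm h ?_
    conv_lhs => rw [← cancel (mul_inv_cancel γ)]
    exact Submodule.map_mono hinv

theorem mem_stab_iff (n : Fin d → ℤ) (γ : GL (Fin d) Fq[X]) :
    γ ∈ Stab Fq n ↔
      (∀ i j, DegreeAtMost ((γ : Matrix (Fin d) (Fin d) Fq[X]) i j) (n i - n j)) ∧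
        ∀ i j, DegreeAtMost ((γ⁻¹ : GL (Fin d) Fq[X]) i j) (n i - n j) := by
  rw [Stab, Set.mem_ofPred_eq, actM_glToF_eq_iff, glToF, glToF, actM_lattM_le_iff,
    actM_lattM_le_iff]

theorem degreeAtMost_one_apply (n : Fin d → ℤ) (i j : Fin d) :
    DegreeAtMost ((1 : Matrix (Fin d) (Fin d) Fq[X]) i j) (n i - n j) := by
  rw [one_apply]
  split_ifs with h
  · rw [h, sub_self]
    exact degreeAtMost_one_iff.mpr le_rfl
  · exact .zero

theorem degreeAtMost_transvection_apply {n : Fin d → ℤ} {a b : Fin d} {c : Fq[X]}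
    (hc : DegreeAtMost c (n a - n b)) (i j : Fin d) :
    DegreeAtMost (transvection a b c i j) (n i - n j) := by
  rw [transvection, Matrix.add_apply, single_apply]
  refine (degreeAtMost_one_apply n i j).add ?_
  split_ifs with h
  · obtain ⟨rfl, rfl⟩ := h
    exact hc
  · exact .zero

theorem degreeAtMost_permMatrix_apply {n : Fin d → ℤ} {σ : Equiv.Perm (Fin d)}
    (hσ : ∀ i, n (σ i) = n i) (i j : Fin d) :
    DegreeAtMost (σ.permMatrix Fq[X] i j) (n i - n j) := by
  rw [Equiv.Perm.permMatrix, PEquiv.toMatrix_apply, Equiv.toPEquiv_apply]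
  split_ifs with h
  · rw [← Option.mem_some_iff.mp h, hσ, sub_self]
    exact degreeAtMost_one_iff.mpr le_rfl
  · exact .zero

theorem transvection_mem_stab {n : Fin d → ℤ} {a b : Fin d} (hab : a ≠ b) {c : Fq[X]}
    (hc : DegreeAtMost c (n a - n b)) :
    SpecialLinearGroup.toGL (SpecialLinearGroup.transvection hab c) ∈ Stab Fq n := by
  rw [mem_stab_iff, ← map_inv, SpecialLinearGroup.transvection_inv]
  exact ⟨degreeAtMost_transvection_apply hc, degreeAtMost_transvection_apply hc.neg⟩

theorem permMatrix_mem_stab {n : Fin d → ℤ} {σ : Equiv.Perm (Fin d)} (hσ : ∀ i, n (σ i) = n i) :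
    permMatrixHom.toHomUnits σ ∈ Stab Fq n := by
  have hσinv : ∀ i, n (σ⁻¹ i) = n i := fun i => by simpa using (hσ (σ⁻¹ i)).symm
  rw [mem_stab_iff, ← map_inv]
  exact ⟨degreeAtMost_permMatrix_apply hσinv,
    degreeAtMost_permMatrix_apply (by simpa only [inv_inv] using hσ)⟩

theorem sub_le_sub_of_stab_subset {n₁ n₂ : Fin d → ℤ} (hsub : Stab Fq n₁ ⊆ Stab Fq n₂)
    {a b : Fin d} (hab : a ≠ b) (hba : n₁ b ≤ n₁ a) : n₁ a - n₁ b ≤ n₂ a - n₂ b := by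
  obtain ⟨e, he⟩ : ∃ e : ℕ, (e : ℤ) = n₁ a - n₁ b := ⟨_, Int.toNat_of_nonneg (by omega)⟩
  have hmem := hsub (transvection_mem_stab hab (degreeAtMost_X_pow_iff.mpr he.le))
  have hentry := ((mem_stab_iff n₂ _).mp hmem).1 a b
  rw [← he, ← degreeAtMost_X_pow_iff (R := Fq)]
  simpa [SpecialLinearGroup.transvection_coe, hab] using hentry

theorem eq_of_stab_subset {n₁ n₂ : Fin d → ℤ} (hsub : Stab Fq n₁ ⊆ Stab Fq n₂)
    {a b : Fin d} (h : n₁ a = n₁ b) : n₂ a = n₂ b := by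
  have hswap : ∀ i, n₁ (Equiv.swap a b i) = n₁ i := fun i => by
    rw [Equiv.swap_apply_def]
    split_ifs <;> simp_all
  have hentry := ((mem_stab_iff n₂ _).mp (hsub (permMatrix_mem_stab hswap))).1
  have hab := hentry a b
  have hba := hentry b a
  simp only [MonoidHom.coe_toHomUnits, permMatrixHom_apply, Equiv.swap_inv, PEquiv.toMatrix_apply,
    Equiv.toPEquiv_apply, Equiv.swap_apply_left, Equiv.swap_apply_right, Option.mem_def,
    ↓reduceIte] at hab hba
  rw [degreeAtMost_one_iff] at hab hba
  omega

theorem stab_subset_of_degreeAtMost_imp {n₁ n₂ : Fin d → ℤ}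
    (h : ∀ i j (p : Fq[X]), DegreeAtMost p (n₁ i - n₁ j) → DegreeAtMost p (n₂ i - n₂ j)) :
    Stab Fq n₁ ⊆ Stab Fq n₂ := fun γ hγ => by
  rw [mem_stab_iff] at hγ ⊢
  exact ⟨fun i j => h i j _ (hγ.1 i j), fun i j => h i j _ (hγ.2 i j)⟩

end

open Matrix Polynomial in
theorem stabilizer_subset_iff_general (Fq : Type) [Field Fq]
    (d : ℕ) (n₁ n₂ : Fin d → ℤ) (hn₁ : NT n₁) :
    Stab Fq n₁ ⊆ Stab Fq n₂ ↔
      ∀ (i : ℕ) (h : i + 1 < d),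
        mdiff n₁ i h ≤ mdiff n₂ i h ∧ (mdiff n₁ i h = 0 ↔ mdiff n₂ i h = 0) := by
  have hanti : Antitone n₁ := hn₁.1
  constructor
  · intro hsub i hi
    have hlt : (⟨i, by omega⟩ : Fin d) < ⟨i + 1, hi⟩ := Fin.mk_lt_mk.mpr i.lt_succ_self
    have hgap : 0 ≤ mdiff n₁ i hi := sub_nonneg.mpr (hanti hlt.le)
    have hle : mdiff n₁ i hi ≤ mdiff n₂ i hi :=
      sub_le_sub_of_stab_subset hsub hlt.ne (hanti hlt.le)
    refine ⟨hle, fun h0 => ?_, fun h0 => by omega⟩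
    exact sub_eq_zero.mpr (eq_of_stab_subset hsub (sub_eq_zero.mp h0))
  · intro h
    refine stab_subset_of_degreeAtMost_imp fun i j p hp => ?_
    rcases sub_neg_or_sub_le_sub hanti (fun i hi => (h i hi).1) (fun i hi => (h i hi).2.mp) i j
      with hneg | hle
    exacts [hp.of_neg hneg, hp.mono hle]

open Matrix Polynomial in
/-- for `n̄¹, n̄² ∈ N_T^d` with difference sequences `m¹, m²`, the containment
`S_{n̄¹} ⊆ S_{n̄²}` holds iff for every `i` one has `m¹_i ≤ m²_i` and (`m¹_i = 0 ↔ m²_i = 0`). -/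
theorem stabilizer_subset_iff (Fq : Type) [Field Fq] [Fintype Fq]
    (d : ℕ) (hd : 2 ≤ d) (n₁ n₂ : Fin d → ℤ) (hn₁ : NT n₁) (hn₂ : NT n₂) :
    Stab Fq n₁ ⊆ Stab Fq n₂ ↔
      ∀ (i : ℕ) (h : i + 1 < d),
        mdiff n₁ i h ≤ mdiff n₂ i h ∧ (mdiff n₁ i h = 0 ↔ mdiff n₂ i h = 0) :=
  stabilizer_subset_iff_general Fq d n₁ n₂ hn₁
end

section
/- For every pair of complex numbers $(\lambda_1, \lambda_2) \in \mathbb{C}^2$ there exists a function $f : T_3 \to \mathbb{C}$ with $f(0,0) = 1$ such that $A_1 f = \lambda_1 f$ and $A_2 f = \lambda_2 f$. Hence the simultaneous spectrum of the Hecke operators $A_1, A_2$ acting on the unrestricted function space $\mathbb{C}^{T_3}$ is all of $\mathbb{C}^2$. -/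
noncomputable section

/-- The Hecke operator `A₁` on functions on (an extension to `ℤ × ℤ` of) the fundamental
domain `T₃ = {(n₁,n₂) : n₁ ≥ n₂ ≥ 0}` of the Bruhat–Tits building of
`PGL₃(𝔽_q((1/t)))` modulo the non-uniform lattice `PGL₃(𝔽_q[t])`. -/
def heckeA1 (q : ℕ) (f : ℤ × ℤ → ℂ) : ℤ × ℤ → ℂ := fun p =>
  if p.1 = 0 ∧ p.2 = 0 then ((q : ℂ) ^ 2 + q + 1) * f (1, 0)
  else if p.2 = 0 then f (p.1 + 1, 0) + (q : ℂ) * ((q : ℂ) + 1) * f (p.1, 1)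
  else if p.1 = p.2 then
    ((q : ℂ) + 1) * f (p.1 + 1, p.1) + (q : ℂ) ^ 2 * f (p.1 - 1, p.1 - 1)
  else f (p.1 + 1, p.2) + (q : ℂ) * f (p.1, p.2 + 1) + (q : ℂ) ^ 2 * f (p.1 - 1, p.2 - 1)

/-- The Hecke operator `A₂` on functions on (an extension to `ℤ × ℤ` of) the fundamental
domain `T₃`. -/
def heckeA2 (q : ℕ) (f : ℤ × ℤ → ℂ) : ℤ × ℤ → ℂ := fun p =>
  if p.1 = 0 ∧ p.2 = 0 then ((q : ℂ) ^ 2 + q + 1) * f (1, 1)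
  else if p.2 = 0 then ((q : ℂ) + 1) * f (p.1 + 1, 1) + (q : ℂ) ^ 2 * f (p.1 - 1, 0)
  else if p.1 = p.2 then
    (q : ℂ) * ((q : ℂ) + 1) * f (p.1, p.1 - 1) + f (p.1 + 1, p.1 + 1)
  else f (p.1 + 1, p.2 + 1) + (q : ℂ) * f (p.1, p.2 - 1) + (q : ℂ) ^ 2 * f (p.1 - 1, p.2)

end

/-!
The eigen-equations can be solved row by row. The `A₁`-equation at `(n₁, n₂)` contains
`f (n₁ + 1, n₂)` with coefficient `1`, `q + 1` or `q² + q + 1`, so it determines every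
off-diagonal value of the next row; the diagonal value `f (n + 1, n + 1)` is taken from the
`A₂`-equation at `(n, n)` instead. This gives `f` with `f (0, 0) = 1`, `A₁ f = λ₁ f` on `T₃`,
and `A₂ f = λ₂ f` on the diagonal. Since `A₁` and `A₂` commute on `T₃` and `A₂` only reads
values in `T₃`, the defect `g = A₂ f - λ₂ f` again satisfies `A₁ g = λ₁ g`; it vanishes on the
diagonal, so by the same row-by-row determination it vanishes on all of `T₃`.
-/

namespace HeckePGL3

def T₃ : Set (ℤ × ℤ) := {p | p.2 ≤ p.1 ∧ 0 ≤ p.2}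

variable (q : ℕ)

theorem natCast_sq_add_add_one_ne_zero : (q : ℂ) ^ 2 + q + 1 ≠ 0 := by
  exact_mod_cast (by positivity : q ^ 2 + q + 1 ≠ 0)

theorem heckeA1_sub_smul (c : ℂ) (u v : ℤ × ℤ → ℂ) :
    heckeA1 q (u - c • v) = heckeA1 q u - c • heckeA1 q v := by
  funext p
  simp only [heckeA1, Pi.sub_apply, Pi.smul_apply, smul_eq_mul]
  split_ifs <;> ring

theorem heckeA2_smul (c : ℂ) (u : ℤ × ℤ → ℂ) : heckeA2 q (c • u) = c • heckeA2 q u := by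
  funext p
  simp only [heckeA2, Pi.smul_apply, smul_eq_mul]
  split_ifs <;> ring

theorem eqOn_heckeA2_of_eqOn {u v : ℤ × ℤ → ℂ} (h : Set.EqOn u v T₃) :
    Set.EqOn (heckeA2 q u) (heckeA2 q v) T₃ := by
  rintro ⟨n1, n2⟩ ⟨h1, h2⟩
  have h' : ∀ a b : ℤ, b ≤ a → 0 ≤ b → u (a, b) = v (a, b) := fun a b hab hb => h ⟨hab, hb⟩
  simp only [heckeA2]
  split_ifs
  · rw [h' 1 1 le_rfl zero_le_one]
  · rw [h' (n1 + 1) 1 (by omega) zero_le_one, h' (n1 - 1) 0 (by omega) le_rfl]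
  · rw [h' (n1 + 1) (n1 + 1) le_rfl (by omega), h' n1 (n1 - 1) (by omega) (by omega)]
  · rw [h' (n1 + 1) (n2 + 1) (by omega) (by omega), h' n1 (n2 - 1) (by omega) (by omega),
      h' (n1 - 1) n2 (by omega) (by omega)]

theorem heckeA1_heckeA2_comm (u : ℤ × ℤ → ℂ) {p : ℤ × ℤ} (hp : p ∈ T₃) :
    heckeA1 q (heckeA2 q u) p = heckeA2 q (heckeA1 q u) p := by
  obtain ⟨n1, n2⟩ := p
  obtain ⟨h1, h2⟩ := hp
  rcases (by omega : n2 = 0 ∨ n2 = 1 ∨ 2 ≤ n2) with h | h | h <;>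
  rcases (by omega : n1 = n2 ∨ n1 = n2 + 1 ∨ n2 + 2 ≤ n1) with h' | h' | h' <;>
  subst_vars <;>
  simp (disch := omega) only [heckeA1, heckeA2, if_pos, if_neg, ↓reduceIte, and_true] <;>
  ring_nf

theorem eqOn_zero_of_heckeA1_eigen_of_diag {lam : ℂ} {g : ℤ × ℤ → ℂ}
    (hg : Set.EqOn (heckeA1 q g) (lam • g) T₃) (hdiag : ∀ n : ℤ, 0 ≤ n → g (n, n) = 0) :
    Set.EqOn g 0 T₃ := by
  suffices h : ∀ k : ℕ, ∀ a b : ℤ, b ≤ a → 0 ≤ b → a < k → g (a, b) = 0 by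
    rintro ⟨a, b⟩ ⟨hab, hb⟩
    exact h (a.toNat + 1) a b hab hb (by omega)
  intro k
  induction k with
  | zero => intros; omega
  | succ k ih =>
    intro a b hab hb hak
    have hlow : ∀ c d : ℤ, d ≤ c → 0 ≤ d → c < a → g (c, d) = 0 :=
      fun c d hcd hd hca => ih c d hcd hd (by omega)
    obtain rfl | hlt := eq_or_lt_of_le hab
    · exact hdiag b hb
    -- The eigen-equation at `(a - 1, b)` expresses `g (a, b)` through values in lower rows.
    have key := hg (show (a - 1, b) ∈ T₃ from ⟨by omega, hb⟩)
    simp only [Pi.smul_apply, smul_eq_mul] at key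
    rcases (by omega : (b = 0 ∧ a = 1) ∨ (b = 0 ∧ 2 ≤ a) ∨ (1 ≤ b ∧ b = a - 1) ∨ (1 ≤ b ∧ b ≤ a - 2))
      with ⟨rfl, rfl⟩ | ⟨rfl, ha⟩ | ⟨hb1, rfl⟩ | ⟨hb1, hba⟩ <;>
    simp (disch := omega) only [heckeA1, if_pos, if_neg, ↓reduceIte, and_true, hlow,
      sub_add_cancel, mul_zero, add_zero] at key
    · exact (mul_eq_zero.mp key).resolve_left (natCast_sq_add_add_one_ne_zero q)
    · exact key
    · exact (mul_eq_zero.mp key).resolve_left (Nat.cast_add_one_ne_zero q)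
    · exact key

theorem heckeA2_eigen_of_heckeA1_eigen_of_diag {lam₁ lam₂ : ℂ} {f : ℤ × ℤ → ℂ}
    (h₁ : Set.EqOn (heckeA1 q f) (lam₁ • f) T₃)
    (h₂ : ∀ n : ℤ, 0 ≤ n → heckeA2 q f (n, n) = lam₂ * f (n, n)) :
    Set.EqOn (heckeA2 q f) (lam₂ • f) T₃ := by
  set g := heckeA2 q f - lam₂ • f with hg
  have hg_eigen : Set.EqOn (heckeA1 q g) (lam₁ • g) T₃ := fun p hp =>
    calc heckeA1 q g p = heckeA1 q (heckeA2 q f) p - lam₂ * heckeA1 q f p := by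
          rw [hg, heckeA1_sub_smul]; rfl
      _ = heckeA2 q (lam₁ • f) p - lam₂ * (lam₁ * f p) := by
          rw [heckeA1_heckeA2_comm q f hp, eqOn_heckeA2_of_eqOn q h₁ hp, h₁ hp]; rfl
      _ = (lam₁ • g) p := by
          rw [heckeA2_smul]
          simp only [hg, Pi.sub_apply, Pi.smul_apply, smul_eq_mul]
          ring
  have hg_diag : ∀ n : ℤ, 0 ≤ n → g (n, n) = 0 := fun n hn => by
    simp [hg, h₂ n hn]
  intro p hp
  simpa [hg, sub_eq_zero] using eqOn_zero_of_heckeA1_eigen_of_diag q hg_eigen hg_diag hp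

variable (lam₁ lam₂ : ℂ)

-- Each branch solves for its top term one eigen-equation centred in the row below:
-- that of `A₂` at `(n - 1, n - 1)` on the diagonal, that of `A₁` at `(n₁ - 1, n₂)` elsewhere.
-- Values with `p.1 ≤ 0` other than `(0, 0)` are never used.
noncomputable def eigenfunction (p : ℤ × ℤ) : ℂ :=
  if p.1 ≤ 0 then 1
  else if p.1 = 1 then (if p.2 = 0 then lam₁ else lam₂) / ((q : ℂ) ^ 2 + q + 1)
  else if p.2 = 0 then
    lam₁ * eigenfunction (p.1 - 1, 0) - q * (q + 1) * eigenfunction (p.1 - 1, 1)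
  else if p.2 = p.1 then
    lam₂ * eigenfunction (p.1 - 1, p.1 - 1) - q * (q + 1) * eigenfunction (p.1 - 1, p.1 - 2)
  else if p.2 = p.1 - 1 then
    (lam₁ * eigenfunction (p.1 - 1, p.1 - 1) - q ^ 2 * eigenfunction (p.1 - 2, p.1 - 2)) / (q + 1)
  else
    lam₁ * eigenfunction (p.1 - 1, p.2) - q * eigenfunction (p.1 - 1, p.2 + 1)
      - q ^ 2 * eigenfunction (p.1 - 2, p.2 - 1)
termination_by p.1.toNat
decreasing_by all_goals omega

theorem eigenfunction_zero_zero : eigenfunction q lam₁ lam₂ (0, 0) = 1 := by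
  simp [eigenfunction]

theorem eigenfunction_one (m : ℤ) : eigenfunction q lam₁ lam₂ (1, m) =
    (if m = 0 then lam₁ else lam₂) / ((q : ℂ) ^ 2 + q + 1) := by
  rw [eigenfunction]
  simp

theorem eigenfunction_succ {n : ℤ} (hn : 1 ≤ n) (m : ℤ) :
    eigenfunction q lam₁ lam₂ (n + 1, m) =
      if m = 0 then
        lam₁ * eigenfunction q lam₁ lam₂ (n, 0) - q * (q + 1) * eigenfunction q lam₁ lam₂ (n, 1)
      else if m = n + 1 then
        lam₂ * eigenfunction q lam₁ lam₂ (n, n) - q * (q + 1) * eigenfunction q lam₁ lam₂ (n, n - 1)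
      else if m = n then
        (lam₁ * eigenfunction q lam₁ lam₂ (n, n)
          - q ^ 2 * eigenfunction q lam₁ lam₂ (n - 1, n - 1)) / (q + 1)
      else
        lam₁ * eigenfunction q lam₁ lam₂ (n, m) - q * eigenfunction q lam₁ lam₂ (n, m + 1)
          - q ^ 2 * eigenfunction q lam₁ lam₂ (n - 1, m - 1) := by
  rw [eigenfunction]
  simp (disch := omega) only [if_neg, add_sub_cancel_right, show n + 1 - 2 = n - 1 by ring]

theorem heckeA1_eigenfunction :
    Set.EqOn (heckeA1 q (eigenfunction q lam₁ lam₂)) (lam₁ • eigenfunction q lam₁ lam₂) T₃ := by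
  rintro ⟨n1, n2⟩ ⟨h1, h2⟩
  simp only [Pi.smul_apply, smul_eq_mul]
  rcases (by omega : (n2 = 0 ∧ n1 = 0) ∨ (n2 = 0 ∧ 1 ≤ n1) ∨ (1 ≤ n2 ∧ n1 = n2) ∨ (1 ≤ n2 ∧ n2 < n1))
    with ⟨rfl, rfl⟩ | ⟨rfl, hn⟩ | ⟨hn, rfl⟩ | ⟨hn, hlt⟩ <;>
  simp (disch := omega) only [heckeA1, if_pos, if_neg, ↓reduceIte, and_true,
    eigenfunction_succ, eigenfunction_one, eigenfunction_zero_zero]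
  · rw [mul_div_cancel₀ _ (natCast_sq_add_add_one_ne_zero q), mul_one]
  · ring
  · rw [mul_div_cancel₀ _ (Nat.cast_add_one_ne_zero q)]
    ring
  · ring

theorem heckeA2_eigenfunction_diag {n : ℤ} (hn : 0 ≤ n) :
    heckeA2 q (eigenfunction q lam₁ lam₂) (n, n) = lam₂ * eigenfunction q lam₁ lam₂ (n, n) := by
  rcases (by omega : n = 0 ∨ 1 ≤ n) with rfl | hn <;>
  simp (disch := omega) only [heckeA2, if_pos, if_neg, ↓reduceIte, and_true,
    eigenfunction_succ, eigenfunction_one, eigenfunction_zero_zero]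
  · rw [mul_div_cancel₀ _ (natCast_sq_add_add_one_ne_zero q), mul_one]
  · ring

end HeckePGL3

theorem hecke_simultaneous_spectrum_full_general (q : ℕ) (lam₁ lam₂ : ℂ) :
    ∃ f : ℤ × ℤ → ℂ, f (0, 0) = 1 ∧
      ∀ p : ℤ × ℤ, p.2 ≤ p.1 → 0 ≤ p.2 →
        heckeA1 q f p = lam₁ * f p ∧ heckeA2 q f p = lam₂ * f p := by
  have h₁ := HeckePGL3.heckeA1_eigenfunction q lam₁ lam₂
  have h₂ := HeckePGL3.heckeA2_eigen_of_heckeA1_eigen_of_diag q h₁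
    (fun _ hn => HeckePGL3.heckeA2_eigenfunction_diag q lam₁ lam₂ hn)
  exact ⟨HeckePGL3.eigenfunction q lam₁ lam₂, HeckePGL3.eigenfunction_zero_zero q lam₁ lam₂,
    fun p hp₁ hp₂ => ⟨h₁ ⟨hp₁, hp₂⟩, h₂ ⟨hp₁, hp₂⟩⟩⟩

/-- for every `(λ₁, λ₂) ∈ ℂ²` there is a simultaneous eigenvector
`f : T₃ → ℂ` of the Hecke operators with `f(0,0) = 1`, `A₁ f = λ₁ f` and `A₂ f = λ₂ f` on
`T₃`; hence the simultaneous spectrum on the unrestricted function space `ℂ^{T₃}` is all of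
`ℂ²`. -/
theorem hecke_simultaneous_spectrum_full (q : ℕ) (hq : 2 ≤ q) (lam₁ lam₂ : ℂ) :
    ∃ f : ℤ × ℤ → ℂ, f (0, 0) = 1 ∧
      ∀ p : ℤ × ℤ, p.2 ≤ p.1 → 0 ≤ p.2 →
        heckeA1 q f p = lam₁ * f p ∧ heckeA2 q f p = lam₂ * f p :=
  hecke_simultaneous_spectrum_full_general q lam₁ lam₂
end
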